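/- For every $\theta \in (-\pi, \pi]$, $\left|\frac{\sinh(e^{i\theta/2})}{\cosh^2(e^{i\theta/2})}\right| \ge \frac{\sinh 1}{\cosh^2 1}$. -/

import Mathlib

/-!
Write `z = x + iy` with `x² + y² = 1`. Then `2‖cosh z‖² = cosh 2x + cos 2y` and
`2‖sinh z‖² = cosh 2x - cos 2y`, so `‖cosh z‖ ≤ cosh 1`, while `sinh 1 · ‖cosh z‖ ≤ cosh 1 · ‖sinh z‖`
is equivalent to `cosh 2 · cos 2y ≤ cosh 2x`. The latter is trivial when `cos 2y ≤ 0`; otherwise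
`y` is small and it follows from the tangent line of `cosh` at `2` together with
`sin y ≥ y - y³/6`. Multiplying the two bounds gives `sinh 1 · ‖cosh z‖² ≤ cosh² 1 · ‖sinh z‖`.
-/

open Real Set

lemma Real.cosh_add_sinh_mul_sub_le_cosh (a b : ℝ) : cosh a + sinh a * (b - a) ≤ cosh b := by
  have hpos : exp a * (b - a + 1) ≤ exp b := by
    rw [show exp b = exp a * exp (b - a) by rw [← exp_add]; ring_nf]
    exact mul_le_mul_of_nonneg_left (add_one_le_exp _) (exp_pos a).le
  have hneg : exp (-a) * (a - b + 1) ≤ exp (-b) := by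
    rw [show exp (-b) = exp (-a) * exp (a - b) by rw [← exp_add]; ring_nf]
    exact mul_le_mul_of_nonneg_left (add_one_le_exp _) (exp_pos (-a)).le
  rw [cosh_eq, cosh_eq, sinh_eq]
  linarith

lemma Real.sq_sub_pow_four_div_three_le_sin_sq {y : ℝ} (hy : y ^ 2 ≤ 6) :
    y ^ 2 - y ^ 4 / 3 ≤ sin y ^ 2 := by
  wlog hy₀ : 0 ≤ y generalizing y
  · simpa [Even.neg_pow ⟨2, rfl⟩] using this (y := -y) (by simpa using hy) (by linarith)
  have hcube : 0 ≤ y - y ^ 3 / 6 := by nlinarith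
  nlinarith [pow_le_pow_left₀ hcube (sin_ge_sub_cube hy₀) 2, pow_nonneg hy₀ 6]

lemma Real.cosh_two_mul_cos_two_mul_le {x y : ℝ} (h : x ^ 2 + y ^ 2 = 1) :
    cosh 2 * cos (2 * y) ≤ cosh (2 * x) := by
  wlog hx₀ : 0 ≤ x generalizing x
  · simpa using this (x := -x) (by simpa using h) (by linarith)
  rcases le_or_gt (cos (2 * y)) 0 with hcos | hcos
  · exact (mul_nonpos_of_nonneg_of_nonpos (cosh_pos 2).le hcos).trans (cosh_pos _).le
  have hsin : y ^ 2 - y ^ 4 / 3 ≤ sin y ^ 2 := sq_sub_pow_four_div_three_le_sin_sq (by nlinarith)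
  have hcos_eq : cos (2 * y) = 1 - 2 * sin y ^ 2 := by rw [cos_two_mul, cos_sq']; ring
  have hy : y ^ 2 < 3 / 4 := by nlinarith
  have hx_half : 1 / 2 < x := by nlinarith
  have hx₁ : x ≤ 1 := by nlinarith
  -- on the circle, `y² - y⁴/3 - (1 - x) = (1 - x)(x³ + x² + 2x - 1)/3`
  have hpoly : 1 - x ≤ sin y ^ 2 := by
    nlinarith [mul_nonneg (by linarith : 0 ≤ 1 - x)
      (by nlinarith : 0 ≤ x ^ 3 + x ^ 2 + 2 * x - 1)]
  calc cosh 2 * cos (2 * y) = cosh 2 * (1 - 2 * sin y ^ 2) := by rw [hcos_eq]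
    _ ≤ cosh 2 * (1 - 2 * (1 - x)) := by gcongr
    _ ≤ cosh 2 + sinh 2 * (2 * x - 2) := by
      nlinarith [mul_nonneg (sub_nonneg.2 (sinh_lt_cosh 2).le) (by linarith : 0 ≤ 1 - x)]
    _ ≤ cosh (2 * x) := cosh_add_sinh_mul_sub_le_cosh 2 (2 * x)

namespace Complex

lemma norm_sinh_sq (z : ℂ) :
    ‖sinh z‖ ^ 2 = (Real.cosh (2 * z.re) - Real.cos (2 * z.im)) / 2 := by
  have hsinh : sinh z = ((Real.sinh z.re * Real.cos z.im : ℝ) : ℂ)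
      + ((Real.cosh z.re * Real.sin z.im : ℝ) : ℂ) * I := by
    conv_lhs => rw [← re_add_im z]
    rw [sinh_add, sinh_mul_I, cosh_mul_I]
    push_cast
    ring
  rw [hsinh, norm_add_mul_I, sq_sqrt (by positivity), Real.cosh_two_mul, Real.cos_two_mul]
  linear_combination (Real.sinh z.re ^ 2 + 1) * Real.sin_sq_add_cos_sq z.im
    + (Real.sin z.im ^ 2 - 1 / 2) * Real.cosh_sq z.re

lemma norm_cosh_sq (z : ℂ) :
    ‖cosh z‖ ^ 2 = (Real.cosh (2 * z.re) + Real.cos (2 * z.im)) / 2 := by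
  have hcosh : cosh z = ((Real.cosh z.re * Real.cos z.im : ℝ) : ℂ)
      + ((Real.sinh z.re * Real.sin z.im : ℝ) : ℂ) * I := by
    conv_lhs => rw [← re_add_im z]
    rw [cosh_add, sinh_mul_I, cosh_mul_I]
    push_cast
    ring
  rw [hcosh, norm_add_mul_I, sq_sqrt (by positivity), Real.cosh_two_mul, Real.cos_two_mul]
  linear_combination Real.sinh z.re ^ 2 * Real.sin_sq_add_cos_sq z.im
    + (Real.cos z.im ^ 2 - 1 / 2) * Real.cosh_sq z.re

lemma norm_cosh_le (z : ℂ) : ‖cosh z‖ ≤ Real.cosh ‖z‖ := by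
  have hre : Real.cosh (2 * z.re) ≤ Real.cosh (2 * ‖z‖) := by
    rw [Real.cosh_le_cosh, abs_mul, abs_mul, abs_norm]
    gcongr
    exact abs_re_le_norm z
  rw [← pow_le_pow_iff_left₀ (norm_nonneg _) (Real.cosh_pos _).le two_ne_zero, norm_cosh_sq]
  linarith [Real.cos_le_one (2 * z.im), Real.cosh_two_mul ‖z‖, Real.cosh_sq ‖z‖]

lemma cosh_ne_zero_of_abs_im_lt {z : ℂ} (h : |z.im| < π / 2) : cosh z ≠ 0 := by
  intro h0
  have hcos : 0 < Real.cos z.im := Real.cos_pos_of_mem_Ioo ⟨by linarith [neg_abs_le z.im],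
    by linarith [le_abs_self z.im]⟩
  have hnorm := norm_cosh_sq z
  rw [h0, norm_zero, Real.cos_two_mul] at hnorm
  nlinarith [Real.one_le_cosh (2 * z.re)]

lemma sinh_one_mul_norm_cosh_le_of_norm_eq_one {z : ℂ} (hz : ‖z‖ = 1) :
    Real.sinh 1 * ‖cosh z‖ ≤ Real.cosh 1 * ‖sinh z‖ := by
  have hcircle : z.re ^ 2 + z.im ^ 2 = 1 := by
    have hsq := Complex.sq_norm z
    rw [hz, normSq_apply] at hsq
    linear_combination -hsq
  have hcosh_two : Real.cosh 2 = 2 * Real.sinh 1 ^ 2 + 1 := by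
    rw [show (2 : ℝ) = 2 * 1 by norm_num, Real.cosh_two_mul, Real.cosh_sq]
    ring
  have key := Real.cosh_two_mul_cos_two_mul_le hcircle
  rw [hcosh_two] at key
  rw [← pow_le_pow_iff_left₀ (by positivity) (by positivity) two_ne_zero, mul_pow, mul_pow,
    norm_sinh_sq, norm_cosh_sq, Real.cosh_sq]
  linarith

lemma sinh_one_div_cosh_one_sq_le_of_norm_eq_one {z : ℂ} (hz : ‖z‖ = 1) :
    Real.sinh 1 / Real.cosh 1 ^ 2 ≤ ‖sinh z / cosh z ^ 2‖ := by
  have hcosh_pos : 0 < ‖cosh z‖ := norm_pos_iff.2 <| cosh_ne_zero_of_abs_im_lt <| by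
    linarith [abs_im_le_norm z, pi_gt_three]
  have hcosh_le : ‖cosh z‖ ≤ Real.cosh 1 := hz ▸ norm_cosh_le z
  rw [norm_div, norm_pow, div_le_div_iff₀ (by positivity) (by positivity)]
  calc Real.sinh 1 * ‖cosh z‖ ^ 2 = Real.sinh 1 * ‖cosh z‖ * ‖cosh z‖ := by ring
    _ ≤ Real.cosh 1 * ‖sinh z‖ * Real.cosh 1 :=
      mul_le_mul (sinh_one_mul_norm_cosh_le_of_norm_eq_one hz) hcosh_le hcosh_pos.le
        (by positivity)
    _ = ‖sinh z‖ * Real.cosh 1 ^ 2 := by ring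

end Complex

theorem sinh_div_cosh_sq_boundary_bound :
    ∀ θ ∈ Ioc (-π) π,
      Real.sinh 1 / Real.cosh 1 ^ 2 ≤
        ‖Complex.sinh (Complex.exp ((θ / 2 : ℂ) * Complex.I)) /
          Complex.cosh (Complex.exp ((θ / 2 : ℂ) * Complex.I)) ^ 2‖ := by
  intro θ _
  apply Complex.sinh_one_div_cosh_one_sq_le_of_norm_eq_one
  rw [← Complex.ofReal_ofNat, ← Complex.ofReal_div, Complex.norm_exp_ofReal_mul_I]
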